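/- Let k₁, k₂, d, w, z be integers with k₁ ≠ 0, d ≠ 0, w ≠ 0, and set s = d/w. Let γ = (√5 − 1)/2 be the golden ratio and define Δ = −k₂/k₁ + s/(z + γ). Then there exists a constant C > 0 such that for all integers m₁, m₂ with m₁ ≠ 0, one has |m₁ Δ + m₂| ≥ C/|m₁|. -/

import Mathlib

/-!
Δ is obtained from the golden ratio φ by integer translations, nonzero integer scalings and
one inversion, and each of these maps an irrational root of an integer quadratic to another
one. An irrational root of an integer quadratic is badly approximable by Liouville's theorem
in degree 2, which is exactly the strong Diophantine condition.
-/

open Polynomial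

def StrongDiophantine (ω : ℝ) : Prop :=
  ∃ C : ℝ, 0 < C ∧ ∀ m₁ m₂ : ℤ, m₁ ≠ 0 → C / |(m₁ : ℝ)| ≤ |(m₁ : ℝ) * ω + m₂|

def IsQuadraticIrrational (x : ℝ) : Prop :=
  Irrational x ∧ ∃ a b c : ℤ, a ≠ 0 ∧ a * x ^ 2 + b * x + c = 0

theorem strongDiophantine_of_forall_pos {ω C : ℝ} (hC : 0 < C)
    (h : ∀ (n : ℕ) (m : ℤ), 0 < n → C / n ≤ |n * ω + m|) : StrongDiophantine ω := by
  refine ⟨C, hC, fun m₁ m₂ hm₁ => ?_⟩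
  obtain ⟨n, rfl | rfl⟩ := Int.eq_nat_or_neg m₁
  · have hn : 0 < n := by omega
    simpa using h n m₂ hn
  · have hn : 0 < n := by omega
    have hflip : |((-n : ℤ) : ℝ) * ω + m₂| = |(n : ℝ) * ω + ((-m₂ : ℤ) : ℝ)| := by
      rw [← abs_neg]; push_cast; ring_nf
    have habs : |((-n : ℤ) : ℝ)| = n := by simp
    rw [hflip, habs]
    exact h n (-m₂) hn

namespace IsQuadraticIrrational

variable {x : ℝ}

theorem strongDiophantine (hx : IsQuadraticIrrational x) : StrongDiophantine x := by
  obtain ⟨hirr, a, b, c, ha, hroot⟩ := hx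
  set f : ℤ[X] := C a * X ^ 2 + C b * X + C c
  have hdeg : f.natDegree = 2 := natDegree_quadratic ha
  have hf : f ≠ 0 := fun h => by simp [h] at hdeg
  have hfx : eval x (f.map (algebraMap ℤ ℝ)) = 0 := by simpa [f] using hroot
  obtain ⟨A, hA, hliouville⟩ := Liouville.exists_pos_real_of_irrational_root hirr hf hfx
  refine strongDiophantine_of_forall_pos (inv_pos.mpr hA) fun n m hn => ?_
  have hn' : (0 : ℝ) < n := by exact_mod_cast hn
  have hbound := hliouville (-m) (n - 1)
  rw [hdeg, Nat.cast_pred hn, sub_add_cancel] at hbound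
  have hdist : |x - ((-m : ℤ) : ℝ) / n| = |n * x + m| / n := by
    rw [eq_div_iff hn'.ne', ← abs_of_pos hn', ← abs_mul, abs_of_pos hn']
    congr 1
    field_simp
    push_cast
    ring
  rw [hdist] at hbound
  rw [inv_div_left, inv_le_iff_one_le_mul₀ (mul_pos hn' hA)]
  calc (1 : ℝ) ≤ (n : ℝ) ^ 2 * (|n * x + m| / n * A) := hbound
    _ = |n * x + m| * (n * A) := by field_simp

theorem add_intCast (hx : IsQuadraticIrrational x) (m : ℤ) :
    IsQuadraticIrrational (x + m) := by
  obtain ⟨hirr, a, b, c, ha, hroot⟩ := hx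
  refine ⟨hirr.add_intCast m, a, b - 2 * a * m, a * m ^ 2 - b * m + c, ha, ?_⟩
  push_cast
  linear_combination hroot

theorem intCast_mul (hx : IsQuadraticIrrational x) {m : ℤ} (hm : m ≠ 0) :
    IsQuadraticIrrational (m * x) := by
  obtain ⟨hirr, a, b, c, ha, hroot⟩ := hx
  refine ⟨hirr.intCast_mul hm, a, b * m, c * m ^ 2, ha, ?_⟩
  push_cast
  linear_combination (m : ℝ) ^ 2 * hroot

theorem div_intCast (hx : IsQuadraticIrrational x) {m : ℤ} (hm : m ≠ 0) :
    IsQuadraticIrrational (x / m) := by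
  obtain ⟨hirr, a, b, c, ha, hroot⟩ := hx
  have hm' : (m : ℝ) ≠ 0 := Int.cast_ne_zero.mpr hm
  refine ⟨hirr.div_intCast hm, a * m ^ 2, b * m, c, mul_ne_zero ha (pow_ne_zero 2 hm), ?_⟩
  push_cast
  field_simp
  linear_combination hroot

protected theorem inv (hx : IsQuadraticIrrational x) : IsQuadraticIrrational x⁻¹ := by
  obtain ⟨hirr, a, b, c, ha, hroot⟩ := hx
  have hx0 : x ≠ 0 := hirr.ne_zero
  -- if c = 0 then x = -b/a would be rational
  have hc : c ≠ 0 := by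
    rintro rfl
    have hlin : (a : ℝ) * x + b = 0 := by
      have : x * (a * x + b) = 0 := by linear_combination hroot
      exact (mul_eq_zero.mp this).resolve_left hx0
    refine hirr ⟨-b / a, ?_⟩
    have ha' : (a : ℝ) ≠ 0 := Int.cast_ne_zero.mpr ha
    push_cast
    field_simp
    linear_combination -hlin
  refine ⟨hirr.inv, c, b, a, hc, ?_⟩
  field_simp
  linear_combination hroot

end IsQuadraticIrrational

open Real in
theorem isQuadraticIrrational_goldenRatio : IsQuadraticIrrational goldenRatio :=
  ⟨goldenRatio_irrational, 1, -1, -1, one_ne_zero, by push_cast; linear_combination goldenRatio_sq⟩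

/-- the sequence element Δ = −k₂/k₁ + s/(z + γ), with s = d/w rational
and γ the golden ratio, satisfies the strong Diophantine condition. -/
theorem delta_strong_diophantine
    (k₁ k₂ d w z : ℤ) (hk₁ : k₁ ≠ 0) (hd : d ≠ 0) (hw : w ≠ 0)
    (s γ Δ : ℝ)
    (hs : s = (d : ℝ) / (w : ℝ))
    (hγ : γ = (Real.sqrt 5 - 1) / 2)
    (hΔ : Δ = -(k₂ : ℝ) / (k₁ : ℝ) + s / ((z : ℝ) + γ)) :
    ∃ C : ℝ, 0 < C ∧ ∀ m₁ m₂ : ℤ, m₁ ≠ 0 →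
      C / |(m₁ : ℝ)| ≤ |(m₁ : ℝ) * Δ + (m₂ : ℝ)| := by
  have hzγ : (z : ℝ) + γ = Real.goldenRatio + ((z - 1 : ℤ) : ℝ) := by
    rw [hγ, Real.goldenRatio]; push_cast; ring
  have hzγ_quad : IsQuadraticIrrational ((z : ℝ) + γ) :=
    hzγ ▸ isQuadraticIrrational_goldenRatio.add_intCast (z - 1)
  have hk₁' : (k₁ : ℝ) ≠ 0 := Int.cast_ne_zero.mpr hk₁
  have hΔ' : Δ = (k₁ * (d * (w * ((z : ℝ) + γ))⁻¹) + ((-k₂ : ℤ) : ℝ)) / k₁ := by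
    rw [hΔ, hs]; push_cast; field_simp; ring
  rw [hΔ']
  exact ((((hzγ_quad.intCast_mul hw).inv.intCast_mul hd).intCast_mul hk₁).add_intCast
    (-k₂)).div_intCast hk₁ |>.strongDiophantine
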